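/- For all positive integers m and e with e ≤ m, A_2(m,e) ≤ M_1(2m, 2e; 1) ≤ A_4(2m, 2e); that is, the maximum size of a 1-GC-prefix-balanced set of DNA words of length 2m with pairwise Hamming distance at least 2e is at least the maximum size of a binary code of length m with minimum distance e, and at most the maximum size of a quaternary code of length 2m with minimum distance 2e. -/

import Mathlib

/-- The four-letter DNA alphabet. -/
inductive DNA | A | T | G | C
deriving DecidableEq

/-- Hamming distance between two words (of equal length) given as lists. -/
def hammingD {α : Type*} [DecidableEq α] (x y : List α) : ℕ :=
  (x.zip y).countP (fun p => decide (p.1 ≠ p.2))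

/-- A binary word has `D`-bounded running digital sum if in every prefix the
numbers of ones and zeros differ by at most `D`. -/
def brds (D : ℕ) (w : List Bool) : Prop :=
  ∀ k ≤ w.length,
    (((w.take k).count true : ℤ) - ((w.take k).count false : ℤ)).natAbs ≤ D

/-- The letters `G`, `C` of the DNA alphabet. -/
def isGC : DNA → Bool
  | DNA.G => true
  | DNA.C => true
  | _ => false

/-- A DNA word is `D`-GC-prefix-balanced if in every prefix the number of
letters from {G,C} and the number of letters from {A,T} differ by at most `D`. -/
def gcpb (D : ℕ) (w : List DNA) : Prop :=
  ∀ k ≤ w.length,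
    (((w.take k).countP isGC : ℤ) - ((w.take k).countP (fun c => !(isGC c)) : ℤ)).natAbs ≤ D

/-- A word is self-uncorrelated if no proper nonempty prefix equals the suffix
of the same length. -/
def selfUncorr {α : Type*} (w : List α) : Prop :=
  ∀ k, 1 ≤ k → k ≤ w.length - 1 → w.take k ≠ w.drop (w.length - k)

/-- A set of words is mutually uncorrelated if every word is self-uncorrelated
and for every ordered pair of distinct words `x`, `y` no nonempty prefix of `y`
equals a suffix of `x` of the same length. -/
def mutUncorr {α : Type*} (S : Set (List α)) : Prop :=
  (∀ w ∈ S, selfUncorr w) ∧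
  ∀ x ∈ S, ∀ y ∈ S, x ≠ y →
    ∀ k, 1 ≤ k → k ≤ x.length → y.take k ≠ x.drop (x.length - k)

/-- A Dyck word: equal numbers of ones and zeros, and every prefix has at least
as many ones as zeros. -/
def isDyck (w : List Bool) : Prop :=
  w.count true = w.count false ∧
  ∀ k ≤ w.length, (w.take k).count false ≤ (w.take k).count true

/-- The height of a (Dyck) word is at most `D`: in every prefix the number of
ones exceeds the number of zeros by at most `D`. -/
def heightLe (D : ℕ) (w : List Bool) : Prop :=
  ∀ k ≤ w.length, ((w.take k).count true : ℤ) - ((w.take k).count false : ℤ) ≤ (D : ℤ)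

/-- Maximum size of a code of length `n` over the alphabet `Fin q` with
pairwise Hamming distance at least `d`. -/
noncomputable def maxCode (q n d : ℕ) : ℕ :=
  sSup {M : ℕ | ∃ C : Finset (List (Fin q)), C.card = M ∧
    (∀ w ∈ C, w.length = n) ∧
    ∀ x ∈ C, ∀ y ∈ C, x ≠ y → d ≤ hammingD x y}

/-- `M₁ n d D`: maximum size of a `D`-GCPB set of DNA words of length `n`
with pairwise Hamming distance at least `d`. -/
noncomputable def M1 (n d D : ℕ) : ℕ :=
  sSup {M : ℕ | ∃ C : Finset (List DNA), C.card = M ∧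
    (∀ w ∈ C, w.length = n) ∧ (∀ w ∈ C, gcpb D w) ∧
    ∀ x ∈ C, ∀ y ∈ C, x ≠ y → d ≤ hammingD x y}

/-!
Encoding each bit of a binary code by `0 ↦ AC`, `1 ↦ GT` doubles both the length and all
Hamming distances, and every prefix of the image has GC-skew `0` or `±1`; this gives the lower
bound. For the upper bound, a `1`-GCPB DNA code is in particular a quaternary code once the four
letters are identified with `Fin 4`. Both maxima are suprema of sets of natural numbers bounded
by `4 ^ (2m)`, so inclusions of these sets give the inequalities.
-/

section Hamming

variable {α β : Type*} [DecidableEq α] [DecidableEq β]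

lemma hammingD_cons (a b : α) (x y : List α) :
    hammingD (a :: x) (b :: y) = (if a = b then 0 else 1) + hammingD x y := by
  by_cases hab : a = b <;> simp [hammingD, hab, add_comm]

lemma hammingD_append {x₁ y₁ : List α} (h : x₁.length = y₁.length) (x₂ y₂ : List α) :
    hammingD (x₁ ++ x₂) (y₁ ++ y₂) = hammingD x₁ y₁ + hammingD x₂ y₂ := by
  rw [hammingD, List.zip_append h, List.countP_append, hammingD, hammingD]

lemma hammingD_eq_zero_iff {x y : List α} (h : x.length = y.length) :
    hammingD x y = 0 ↔ x = y := by
  induction x generalizing y with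
  | nil => cases y <;> simp_all [hammingD]
  | cons a x ih =>
    cases y with
    | nil => simp at h
    | cons b y =>
      simp only [List.length_cons, Nat.add_right_cancel_iff] at h
      by_cases hab : a = b <;> simp [hammingD_cons, hab, ih h]

lemma hammingD_self (x : List α) : hammingD x x = 0 :=
  (hammingD_eq_zero_iff rfl).mpr rfl

lemma hammingD_map_of_injective {f : α → β} (hf : Function.Injective f) (x y : List α) :
    hammingD (x.map f) (y.map f) = hammingD x y := by
  simp only [hammingD, List.zip_map, List.countP_map]
  exact List.countP_congr fun p _ => by simp [hf.ne_iff]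

lemma hammingD_flatMap {f : α → List β} {c : ℕ} (hlen : ∀ a b, (f a).length = (f b).length)
    (hdist : ∀ a b, a ≠ b → hammingD (f a) (f b) = c) {x y : List α}
    (h : x.length = y.length) :
    hammingD (x.flatMap f) (y.flatMap f) = c * hammingD x y := by
  induction x generalizing y with
  | nil => cases y <;> simp_all [hammingD]
  | cons a x ih =>
    cases y with
    | nil => simp at h
    | cons b y =>
      simp only [List.length_cons, Nat.add_right_cancel_iff] at h
      rw [List.flatMap_cons, List.flatMap_cons, hammingD_append (hlen a b), ih h, hammingD_cons]
      by_cases hab : a = b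
      · simp [hab, hammingD_self]
      · simp [hab, hdist a b hab, mul_add, add_comm]

end Hamming

lemma card_le_card_pow_of_forall_length_eq {α : Type*} [Fintype α] {n : ℕ} (C : Finset (List α))
    (hC : ∀ w ∈ C, w.length = n) : C.card ≤ Fintype.card α ^ n := by
  calc C.card = (C.subtype fun w => w.length = n).card := by
        rw [Finset.card_subtype, Finset.filter_true_of_mem hC]
    _ ≤ Fintype.card (List.Vector α n) := Finset.card_le_univ (α := List.Vector α n) _
    _ = Fintype.card α ^ n := card_vector n

lemma gcpb_nil (D : ℕ) : gcpb D [] := by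
  intro k hk
  simp_all

lemma gcpb_cons_cons {D : ℕ} (hD : 1 ≤ D) {a b : DNA} (hab : isGC a ≠ isGC b) {w : List DNA}
    (hw : gcpb D w) : gcpb D (a :: b :: w) := by
  intro k hk
  match k with
  | 0 => simp
  | 1 => cases ha : isGC a <;> simpa [ha] using hD
  | k + 2 =>
    have hk : k ≤ w.length := by simp at hk; omega
    have := hw k hk
    cases ha : isGC a <;> cases hb : isGC b <;> simp_all

/-- Each block has one letter from `{G,C}` and one from `{A,T}`, and the two blocks differ in
both positions. -/
def dnaBlock : Fin 2 → List DNA := ![[DNA.A, DNA.C], [DNA.G, DNA.T]]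

def dnaEncode (w : List (Fin 2)) : List DNA := w.flatMap dnaBlock

lemma length_dnaEncode (w : List (Fin 2)) : (dnaEncode w).length = 2 * w.length := by
  induction w with
  | nil => rfl
  | cons b w ih =>
    fin_cases b <;> simp_all [dnaEncode, dnaBlock] <;> ring

lemma hammingD_dnaEncode {x y : List (Fin 2)} (h : x.length = y.length) :
    hammingD (dnaEncode x) (dnaEncode y) = 2 * hammingD x y :=
  hammingD_flatMap (by decide) (by decide) h

lemma dnaEncode_injective : Function.Injective dnaEncode := by
  intro x y hxy
  have hlen : x.length = y.length := by
    have := congrArg List.length hxy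
    rwa [length_dnaEncode, length_dnaEncode, Nat.mul_left_cancel_iff two_pos] at this
  have h0 : 2 * hammingD x y = 0 := by
    rw [← hammingD_dnaEncode hlen, hxy, hammingD_self]
  exact (hammingD_eq_zero_iff hlen).mp (by omega)

lemma gcpb_dnaEncode (w : List (Fin 2)) : gcpb 1 (dnaEncode w) := by
  induction w with
  | nil => exact gcpb_nil 1
  | cons b w ih =>
    rw [dnaEncode, List.flatMap_cons]
    fin_cases b <;> exact gcpb_cons_cons le_rfl (by decide) ih

def DNA.toFin4 : DNA → Fin 4
  | DNA.A => 0 | DNA.T => 1 | DNA.G => 2 | DNA.C => 3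

lemma DNA.toFin4_injective : Function.Injective DNA.toFin4 := by
  intro a b h
  cases a <;> cases b <;> first | rfl | exact absurd h (by decide)

def codeSizes (q n d : ℕ) : Set ℕ :=
  {M : ℕ | ∃ C : Finset (List (Fin q)), C.card = M ∧
    (∀ w ∈ C, w.length = n) ∧
    ∀ x ∈ C, ∀ y ∈ C, x ≠ y → d ≤ hammingD x y}

def gcpbCodeSizes (n d D : ℕ) : Set ℕ :=
  {M : ℕ | ∃ C : Finset (List DNA), C.card = M ∧
    (∀ w ∈ C, w.length = n) ∧ (∀ w ∈ C, gcpb D w) ∧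
    ∀ x ∈ C, ∀ y ∈ C, x ≠ y → d ≤ hammingD x y}

lemma maxCode_eq_sSup (q n d : ℕ) : maxCode q n d = sSup (codeSizes q n d) := rfl

lemma M1_eq_sSup (n d D : ℕ) : M1 n d D = sSup (gcpbCodeSizes n d D) := rfl

lemma bddAbove_codeSizes (q n d : ℕ) : BddAbove (codeSizes q n d) := by
  refine ⟨q ^ n, ?_⟩
  rintro _ ⟨C, rfl, hlen, -⟩
  simpa using card_le_card_pow_of_forall_length_eq C hlen

lemma zero_mem_codeSizes (q n d : ℕ) : 0 ∈ codeSizes q n d :=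
  ⟨∅, rfl, by simp, by simp⟩

lemma codeSizes_subset_gcpbCodeSizes (m e : ℕ) :
    codeSizes 2 m e ⊆ gcpbCodeSizes (2 * m) (2 * e) 1 := by
  rintro _ ⟨C, rfl, hlen, hdist⟩
  refine ⟨C.map ⟨dnaEncode, dnaEncode_injective⟩, Finset.card_map _, ?_, ?_, ?_⟩
  · simp only [Finset.mem_map, Function.Embedding.coeFn_mk]
    rintro _ ⟨x, hx, rfl⟩
    rw [length_dnaEncode, hlen x hx]
  · simp only [Finset.mem_map, Function.Embedding.coeFn_mk]
    rintro _ ⟨x, -, rfl⟩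
    exact gcpb_dnaEncode x
  · simp only [Finset.mem_map, Function.Embedding.coeFn_mk]
    rintro _ ⟨x, hx, rfl⟩ _ ⟨y, hy, rfl⟩ hxy
    rw [hammingD_dnaEncode ((hlen x hx).trans (hlen y hy).symm)]
    exact Nat.mul_le_mul_left 2 (hdist x hx y hy (ne_of_apply_ne _ hxy))

lemma gcpbCodeSizes_subset_codeSizes (n d D : ℕ) : gcpbCodeSizes n d D ⊆ codeSizes 4 n d := by
  rintro _ ⟨C, rfl, hlen, -, hdist⟩
  have hinj : Function.Injective (List.map DNA.toFin4) :=
    List.map_injective_iff.mpr DNA.toFin4_injective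
  refine ⟨C.map ⟨_, hinj⟩, Finset.card_map _, ?_, ?_⟩
  · simp only [Finset.mem_map, Function.Embedding.coeFn_mk]
    rintro _ ⟨x, hx, rfl⟩
    rw [List.length_map, hlen x hx]
  · simp only [Finset.mem_map, Function.Embedding.coeFn_mk]
    rintro _ ⟨x, hx, rfl⟩ _ ⟨y, hy, rfl⟩ hxy
    rw [hammingD_map_of_injective DNA.toFin4_injective]
    exact hdist x hx y hy (ne_of_apply_ne _ hxy)

theorem stmt3_general (m e : ℕ) :
    maxCode 2 m e ≤ M1 (2 * m) (2 * e) 1 ∧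
    M1 (2 * m) (2 * e) 1 ≤ maxCode 4 (2 * m) (2 * e) := by
  have hsub := gcpbCodeSizes_subset_codeSizes (2 * m) (2 * e) 1
  have hbdd := bddAbove_codeSizes 4 (2 * m) (2 * e)
  rw [maxCode_eq_sSup, maxCode_eq_sSup, M1_eq_sSup]
  exact ⟨csSup_le_csSup (hbdd.mono hsub) ⟨0, zero_mem_codeSizes 2 m e⟩
      (codeSizes_subset_gcpbCodeSizes m e),
    csSup_le_csSup hbdd ⟨0, codeSizes_subset_gcpbCodeSizes m e (zero_mem_codeSizes 2 m e)⟩ hsub⟩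

/-- `A₂(m,e) ≤ M₁(2m, 2e; 1) ≤ A₄(2m, 2e)`. -/
theorem stmt3 (m e : ℕ) (hm : 0 < m) (he : 0 < e) (hem : e ≤ m) :
    maxCode 2 m e ≤ M1 (2 * m) (2 * e) 1 ∧
    M1 (2 * m) (2 * e) 1 ≤ maxCode 4 (2 * m) (2 * e) :=
  stmt3_general m e
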